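/- Let H be a densely defined self-adjoint operator on a complex Hilbert space 𝒳, let B be a cyclic CAR representation of a complex Hilbert space 𝒦 on 𝒳, let K₀ be a densely defined operator on 𝒦, and let E₀ be a real number such that for every ε ∈ (0,1] there exists a unit vector Ξ_ε ∈ D(H) with ‖(H − E₀)Ξ_ε‖ ≤ ε. Assume the weak commutator hypothesis: for every h ∈ D(K₀) there is a map R(h) : D(H) → 𝒳 such that for all Φ, Ψ ∈ D(H): ⟨HΦ, (B(h) + B(h)*)Ψ⟩ − ⟨(B(h) + B(h)*)Φ, HΨ⟩ = ⟨Φ, (B(K₀h)* − B(K₀h))Ψ + R(h)Ψ⟩, and moreover for every sequence (h_n) in D(K₀) with ‖h_n‖ = 1 and h_n → 0 weakly, R(h_n)Ψ → 0 in norm for every Ψ ∈ D(H). Let λ be a nonzero real number admitting a singular Weyl sequence for K₀, i.e. a sequence (h_n) in D(K₀) with ‖h_n‖ = 1, h_n → 0 weakly, and ‖K₀h_n − λh_n‖ → 0. Then there exists a singular Weyl sequence for H at E₀ + λ: a sequence of unit vectors Ψ_j ∈ D(H) with Ψ_j → 0 weakly and ‖HΨ_j − (E₀ + λ)Ψ_j‖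 → 0. -/

import Mathlib

open ContinuousLinearMap in
/-- A CAR representation of a complex Hilbert space `𝒦` on a complex Hilbert space `𝒳`:
a map `B` assigning to each `f ∈ 𝒦` a bounded operator on `𝒳`, conjugate-linear in `f`,
satisfying `B(f)B(g)* + B(g)*B(f) = ⟨f,g⟩·I` and `B(f)B(g) + B(g)B(f) = 0`. -/
structure CARRep (𝒦 𝒳 : Type*) [NormedAddCommGroup 𝒦] [InnerProductSpace ℂ 𝒦]
    [NormedAddCommGroup 𝒳] [InnerProductSpace ℂ 𝒳] [CompleteSpace 𝒳] where
  B : 𝒦 → (𝒳 →L[ℂ] 𝒳)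
  map_add : ∀ f g, B (f + g) = B f + B g
  map_smul : ∀ (c : ℂ) (f), B (c • f) = (starRingEnd ℂ c) • B f
  car_mixed : ∀ f g,
    B f * adjoint (B g) + adjoint (B g) * B f = (inner ℂ f g : ℂ) • (1 : 𝒳 →L[ℂ] 𝒳)
  car_ann : ∀ f g, B f * B g + B g * B f = 0

/-- A CAR representation is *cyclic* if the linear span of the vectors
`B(f₁)* ⋯ B(f_l)* v`, with `l ≥ 0`, `f_i ∈ 𝒦` and `v` in the vacuum subspace
`{v | B(f)v = 0 for all f}`, is dense in `𝒳`. -/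
def CARRep.IsCyclic {𝒦 𝒳 : Type*} [NormedAddCommGroup 𝒦] [InnerProductSpace ℂ 𝒦]
    [NormedAddCommGroup 𝒳] [InnerProductSpace ℂ 𝒳] [CompleteSpace 𝒳]
    (rep : CARRep 𝒦 𝒳) : Prop :=
  Dense (Submodule.span ℂ
    {x : 𝒳 | ∃ (l : ℕ) (f : Fin l → 𝒦) (v : 𝒳), (∀ g : 𝒦, rep.B g v = 0) ∧
      x = (List.ofFn fun i : Fin l =>
        ContinuousLinearMap.adjoint (rep.B (f i))).prod v} : Set 𝒳)

/-!
The field operator `B(h) + B(h)*` of a unit vector `h` is a self-adjoint isometry, since by the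
CAR it squares to `‖h‖²`. So for a unit `Ξ ∈ D(H)` with `‖(H - E₀)Ξ‖` small, the vector
`Ψ = (B(h) + B(h)*)Ξ` is a unit vector; the weak commutator identity and the self-adjointness of
`H` put `Ψ` in `D(H)` with `HΨ = (B(h) + B(h)*)HΞ + (B(K₀h)* - B(K₀h))Ξ + R(h)Ξ`. Splitting
`K₀h = λh + (K₀h - λh)` gives
`‖(H - E₀ - λ)Ψ‖ ≤ ‖(H - E₀)Ξ‖ + 2‖K₀h - λh‖ + 2|λ|‖B(h)Ξ‖ + ‖R(h)Ξ‖`.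
Along a bounded weakly null sequence `hₙ`, `B(hₙ) → 0` strongly: on the cyclic generators this
follows from the anticommutation relations by induction on their length, and it passes to the
closure of their span by equicontinuity. Taking `Ξ = Ξ_{1/(j+1)}` and `h = h_{m_j}` with `m_j ≥ j`
far enough out makes every error term small, and makes `Ψ_j` weakly null because
`⟨Φ, Ψ_j⟩ = ⟨Φ, B(h)Ξ⟩ + ⟨B(h)Φ, Ξ⟩`.
-/

open ContinuousLinearMap Filter Topology
open scoped InnerProductSpace

section SelfAdjoint

variable {𝕜 E : Type*} [RCLike 𝕜] [NormedAddCommGroup E] [InnerProductSpace 𝕜 E]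
  [CompleteSpace E] {H : E →ₗ.[𝕜] E}

theorem IsSelfAdjoint.exists_of_forall_inner_eq (hH : IsSelfAdjoint H) {ξ w : E}
    (hw : ∀ x : H.domain, ⟪w, (x : E)⟫_𝕜 = ⟪ξ, H x⟫_𝕜) :
    ∃ Ψ : H.domain, (Ψ : E) = ξ ∧ H Ψ = w := by
  have hξ : ξ ∈ H.adjoint.domain := LinearPMap.mem_adjoint_domain_of_exists ξ ⟨w, hw⟩
  obtain ⟨Ψ, hΨ, hHΨ⟩ :=
    LinearPMap.exists_of_le (LinearPMap.isSelfAdjoint_def.mp hH).le ⟨ξ, hξ⟩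
  exact ⟨Ψ, hΨ.symm, hHΨ ▸ LinearPMap.adjoint_apply_eq hH.dense_domain ⟨ξ, hξ⟩ hw⟩

theorem IsSelfAdjoint.exists_apply_mem_domain_of_commutator (hH : IsSelfAdjoint H)
    {C : E →L[𝕜] E} (hC : IsSelfAdjoint C) (S : H.domain → E)
    (hcomm : ∀ Φ Ψ : H.domain, ⟪H Φ, C Ψ⟫_𝕜 - ⟪C Φ, H Ψ⟫_𝕜 = ⟪(Φ : E), S Ψ⟫_𝕜)
    (Ψ : H.domain) :
    ∃ Ψ' : H.domain, (Ψ' : E) = C Ψ ∧ H Ψ' = C (H Ψ) + S Ψ := by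
  refine hH.exists_of_forall_inner_eq fun Φ => ?_
  have h := congrArg (starRingEnd 𝕜) (hcomm Φ Ψ)
  simp only [map_sub, inner_conj_symm] at h
  rw [inner_add_left, ← hC.adjoint_eq, adjoint_inner_left, hC.adjoint_eq]
  linear_combination -h

end SelfAdjoint

namespace CARRep

variable {𝒦 𝒳 : Type*} [NormedAddCommGroup 𝒦] [InnerProductSpace ℂ 𝒦]
  [NormedAddCommGroup 𝒳] [InnerProductSpace ℂ 𝒳] [CompleteSpace 𝒳] (rep : CARRep 𝒦 𝒳)

theorem norm_B_apply_sq_add_norm_adjoint_B_apply_sq (f : 𝒦) (x : 𝒳) :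
    ‖rep.B f x‖ ^ 2 + ‖adjoint (rep.B f) x‖ ^ 2 = ‖f‖ ^ 2 * ‖x‖ ^ 2 := by
  have h := congrArg (fun A : 𝒳 →L[ℂ] 𝒳 => ⟪x, A x⟫_ℂ) (rep.car_mixed f f)
  have h₁ : ⟪x, rep.B f (adjoint (rep.B f) x)⟫_ℂ = ‖adjoint (rep.B f) x‖ ^ 2 := by
    rw [← adjoint_inner_left, inner_self_eq_norm_sq_to_K]; rfl
  have h₂ : ⟪x, adjoint (rep.B f) (rep.B f x)⟫_ℂ = ‖rep.B f x‖ ^ 2 := by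
    rw [adjoint_inner_right, inner_self_eq_norm_sq_to_K]; rfl
  simp only [add_apply, mul_apply_eq_comp, smul_apply, one_apply_eq_self, inner_add_right,
    inner_smul_right, h₁, h₂, inner_self_eq_norm_sq_to_K] at h
  apply Complex.ofReal_injective
  push_cast
  linear_combination h

theorem norm_B_apply_le (f : 𝒦) (x : 𝒳) : ‖rep.B f x‖ ≤ ‖f‖ * ‖x‖ := by
  refine (pow_le_pow_iff_left₀ (norm_nonneg _) (by positivity) two_ne_zero).1 ?_
  linarith [rep.norm_B_apply_sq_add_norm_adjoint_B_apply_sq f x, mul_pow ‖f‖ ‖x‖ 2,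
    sq_nonneg ‖adjoint (rep.B f) x‖]

theorem norm_adjoint_B_apply_le (f : 𝒦) (x : 𝒳) : ‖adjoint (rep.B f) x‖ ≤ ‖f‖ * ‖x‖ := by
  refine (pow_le_pow_iff_left₀ (norm_nonneg _) (by positivity) two_ne_zero).1 ?_
  linarith [rep.norm_B_apply_sq_add_norm_adjoint_B_apply_sq f x, mul_pow ‖f‖ ‖x‖ 2,
    sq_nonneg ‖rep.B f x‖]

theorem B_apply_adjoint_B_apply (f g : 𝒦) (x : 𝒳) :
    rep.B f (adjoint (rep.B g) x) = ⟪f, g⟫_ℂ • x - adjoint (rep.B g) (rep.B f x) := by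
  have h := congrArg (fun A : 𝒳 →L[ℂ] 𝒳 => A x) (rep.car_mixed f g)
  simp only [add_apply, mul_apply_eq_comp, smul_apply, one_apply_eq_self] at h
  rw [← h, add_sub_cancel_right]

theorem B_mul_self (f : 𝒦) : rep.B f * rep.B f = 0 := by
  have h : (2 : ℂ) • (rep.B f * rep.B f) = 0 := by rw [two_smul]; exact rep.car_ann f f
  exact (smul_eq_zero.mp h).resolve_left two_ne_zero

section WeaklyNull

variable {h : ℕ → 𝒦}

theorem tendsto_B_apply_adjoint_B_apply
    (hweak : ∀ g : 𝒦, Tendsto (fun n => ⟪g, h n⟫_ℂ) atTop (𝓝 0)) {x : 𝒳}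
    (hx : Tendsto (fun n => rep.B (h n) x) atTop (𝓝 0)) (g : 𝒦) :
    Tendsto (fun n => rep.B (h n) (adjoint (rep.B g) x)) atTop (𝓝 0) := by
  have hg : Tendsto (fun n => ⟪h n, g⟫_ℂ) atTop (𝓝 0) := by
    rw [tendsto_zero_iff_norm_tendsto_zero]
    exact (tendsto_zero_iff_norm_tendsto_zero.1 (hweak g)).congr fun n => norm_inner_symm _ _
  simp only [B_apply_adjoint_B_apply]
  simpa using (hg.smul_const x).sub (((adjoint (rep.B g)).continuous.tendsto 0).comp hx)

theorem tendsto_B_apply_ofFn_prod_adjoint_B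
    (hweak : ∀ g : 𝒦, Tendsto (fun n => ⟪g, h n⟫_ℂ) atTop (𝓝 0))
    {l : ℕ} (f : Fin l → 𝒦) {v : 𝒳} (hv : ∀ g : 𝒦, rep.B g v = 0) :
    Tendsto (fun n => rep.B (h n) ((List.ofFn fun i => adjoint (rep.B (f i))).prod v))
      atTop (𝓝 0) := by
  induction l with
  | zero => simp [hv]
  | succ l ih =>
    simp only [List.ofFn_succ, List.prod_cons, mul_apply_eq_comp]
    exact rep.tendsto_B_apply_adjoint_B_apply hweak (ih _) _

theorem tendsto_B_apply_of_isCyclic (hcyc : rep.IsCyclic)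
    (hweak : ∀ g : 𝒦, Tendsto (fun n => ⟪g, h n⟫_ℂ) atTop (𝓝 0))
    {C : ℝ} (hbdd : ∀ n, ‖h n‖ ≤ C) (x : 𝒳) :
    Tendsto (fun n => rep.B (h n) x) atTop (𝓝 0) := by
  have hequi : Equicontinuous fun n => ⇑(rep.B (h n)) := by
    have hiff := (NormedSpace.equicontinuous_TFAE fun n => rep.B (h n)).out 3 1
    exact hiff.1 ⟨C, fun n x => (rep.norm_B_apply_le _ x).trans (by gcongr; exact hbdd n)⟩
  refine Dense.induction hcyc (fun y hy => ?_)
    (hequi.isClosed_setOfPred_tendsto continuous_const) x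
  induction hy using Submodule.span_induction with
  | mem y hy =>
    obtain ⟨l, f, v, hv, rfl⟩ := hy
    exact rep.tendsto_B_apply_ofFn_prod_adjoint_B hweak f hv
  | zero => simp
  | add y z _ _ hy hz => simpa using hy.add hz
  | smul c y _ hy => simpa using hy.const_smul c

end WeaklyNull

noncomputable def field (f : 𝒦) : 𝒳 →L[ℂ] 𝒳 := rep.B f + adjoint (rep.B f)

theorem isSelfAdjoint_field (f : 𝒦) : IsSelfAdjoint (rep.field f) := by
  rw [isSelfAdjoint_iff', field, _root_.map_add, adjoint_adjoint, add_comm]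

theorem field_mul_self (f : 𝒦) : rep.field f * rep.field f = ⟪f, f⟫_ℂ • 1 := by
  have hadj : adjoint (rep.B f) * adjoint (rep.B f) = 0 := by
    simpa only [star_eq_adjoint, star_mul, star_zero] using congrArg star (rep.B_mul_self f)
  rw [field, add_mul, mul_add, mul_add, B_mul_self, hadj, ← rep.car_mixed f f]
  abel

theorem norm_field_apply (f : 𝒦) (x : 𝒳) : ‖rep.field f x‖ = ‖f‖ * ‖x‖ := by
  refine (pow_left_inj₀ (norm_nonneg _) (by positivity) two_ne_zero).1 ?_
  rw [apply_norm_sq_eq_inner_adjoint_right, (rep.isSelfAdjoint_field f).adjoint_eq, ← mul_def,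
    field_mul_self, smul_apply, one_apply_eq_self, inner_smul_right, inner_self_eq_norm_sq_to_K,
    inner_self_eq_norm_sq_to_K]
  norm_cast
  ring

theorem norm_inner_field_apply_le (f : 𝒦) (x y : 𝒳) :
    ‖⟪y, rep.field f x⟫_ℂ‖ ≤ ‖y‖ * ‖rep.B f x‖ + ‖rep.B f y‖ * ‖x‖ := by
  rw [field, add_apply, inner_add_right, adjoint_inner_right]
  exact (norm_add_le _ _).trans (add_le_add (norm_inner_le_norm _ _) (norm_inner_le_norm _ _))

theorem norm_field_residual_le (f g : 𝒦) (x y r : 𝒳) (E lam : ℝ) :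
    ‖rep.field f y + ((adjoint (rep.B g) - rep.B g) x + r)
        - ((E + lam : ℝ) : ℂ) • rep.field f x‖
      ≤ ‖f‖ * ‖y - (E : ℂ) • x‖ + 2 * (‖g - (lam : ℂ) • f‖ * ‖x‖)
        + 2 * |lam| * ‖rep.B f x‖ + ‖r‖ := by
  set k := g - (lam : ℂ) • f
  have hB : rep.B g = rep.B k + (lam : ℂ) • rep.B f := by
    rw [← Complex.conj_ofReal lam, ← rep.map_smul, ← rep.map_add, sub_add_cancel]
  have hsplit : rep.field f y + ((adjoint (rep.B g) - rep.B g) x + r)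
        - ((E + lam : ℝ) : ℂ) • rep.field f x
      = rep.field f (y - (E : ℂ) • x) + (adjoint (rep.B k) x - rep.B k x)
        + ((-2 * lam : ℝ) : ℂ) • rep.B f x + r := by
    rw [hB, _root_.map_add, LinearIsometryEquiv.map_smulₛₗ, Complex.conj_ofReal, field]
    simp only [map_sub, ContinuousLinearMap.map_smul, add_apply, sub_apply, smul_apply]
    push_cast
    module
  rw [hsplit]
  refine norm_add₄_le.trans (add_le_add (add_le_add (add_le_add ?_ ?_) ?_) le_rfl)
  · rw [norm_field_apply]
  · refine (norm_sub_le _ _).trans ?_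
    linarith [rep.norm_adjoint_B_apply_le k x, rep.norm_B_apply_le k x]
  · rw [norm_smul, Complex.norm_real, Real.norm_eq_abs, abs_mul, abs_neg, abs_two]

end CARRep

open ContinuousLinearMap in
theorem essential_spectrum_main_general {𝒦 𝒳 : Type*}
    [NormedAddCommGroup 𝒦] [InnerProductSpace ℂ 𝒦]
    [NormedAddCommGroup 𝒳] [InnerProductSpace ℂ 𝒳] [CompleteSpace 𝒳]
    (H : 𝒳 →ₗ.[ℂ] 𝒳) (hHsa : IsSelfAdjoint H)
    (rep : CARRep 𝒦 𝒳) (hcyc : rep.IsCyclic)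
    (K₀ : 𝒦 →ₗ.[ℂ] 𝒦)
    (E₀ : ℝ)
    (hE₀ : ∀ ε : ℝ, 0 < ε → ε ≤ 1 → ∃ Ξ : H.domain, ‖(Ξ : 𝒳)‖ = 1 ∧
      ‖H Ξ - (E₀ : ℂ) • (Ξ : 𝒳)‖ ≤ ε)
    (R : K₀.domain → H.domain → 𝒳)
    (hR : ∀ (h : K₀.domain) (Φ Ψ : H.domain),
      (inner ℂ (H Φ) ((rep.B (h : 𝒦) + adjoint (rep.B (h : 𝒦))) (Ψ : 𝒳)) : ℂ)
          - (inner ℂ ((rep.B (h : 𝒦) + adjoint (rep.B (h : 𝒦))) (Φ : 𝒳)) (H Ψ) : ℂ)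
        = (inner ℂ (Φ : 𝒳)
            ((adjoint (rep.B (K₀ h)) - rep.B (K₀ h)) (Ψ : 𝒳) + R h Ψ) : ℂ))
    (hRnull : ∀ h : ℕ → K₀.domain, (∀ n, ‖(h n : 𝒦)‖ = 1) →
      (∀ g : 𝒦, Filter.Tendsto (fun n => (inner ℂ g ((h n : 𝒦)) : ℂ)) Filter.atTop (nhds 0)) →
      ∀ Ψ : H.domain, Filter.Tendsto (fun n => ‖R (h n) Ψ‖) Filter.atTop (nhds 0))
    (lam : ℝ)
    (h : ℕ → K₀.domain) (hhnorm : ∀ n, ‖(h n : 𝒦)‖ = 1)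
    (hhweak : ∀ g : 𝒦,
      Filter.Tendsto (fun n => (inner ℂ g ((h n : 𝒦)) : ℂ)) Filter.atTop (nhds 0))
    (hhweyl : Filter.Tendsto (fun n => ‖K₀ (h n) - (lam : ℂ) • ((h n : 𝒦))‖)
      Filter.atTop (nhds 0)) :
    ∃ Ψ : ℕ → H.domain, (∀ j, ‖(Ψ j : 𝒳)‖ = 1) ∧
      (∀ Φ : 𝒳, Filter.Tendsto (fun j => (inner ℂ Φ ((Ψ j : 𝒳)) : ℂ)) Filter.atTop (nhds 0)) ∧
      Filter.Tendsto (fun j => ‖H (Ψ j) - ((E₀ + lam : ℝ) : ℂ) • ((Ψ j : 𝒳))‖)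
        Filter.atTop (nhds 0) := by
  set ε : ℕ → ℝ := fun j => 1 / ((j : ℝ) + 1)
  have hε : Tendsto ε atTop (𝓝 0) := tendsto_one_div_add_atTop_nhds_zero_nat
  have hBnull : ∀ x : 𝒳, Tendsto (fun n => ‖rep.B (h n) x‖) atTop (𝓝 0) := fun x =>
    tendsto_zero_iff_norm_tendsto_zero.1 <|
      rep.tendsto_B_apply_of_isCyclic hcyc hhweak (fun n => (hhnorm n).le) x
  choose Ξ hΞnorm hΞ using fun j : ℕ =>
    hE₀ (ε j) Nat.one_div_pos_of_nat ((div_le_one₀ (by positivity)).2 (by simp))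
  have hsmall : ∀ j, ∃ m ≥ j, ‖rep.B (h m) (Ξ j)‖ ≤ ε j ∧
      ‖K₀ (h m) - (lam : ℂ) • (h m : 𝒦)‖ ≤ ε j ∧ ‖R (h m) (Ξ j)‖ ≤ ε j := fun j =>
    frequently_atTop.1 (((hBnull (Ξ j)).eventually_le_const Nat.one_div_pos_of_nat).and
      ((hhweyl.eventually_le_const Nat.one_div_pos_of_nat).and
        ((hRnull h hhnorm hhweak (Ξ j)).eventually_le_const Nat.one_div_pos_of_nat))).frequently j
  choose m hmj hmB hmK hmR using hsmall
  choose Ψ hΨ hHΨ using fun j => hHsa.exists_apply_mem_domain_of_commutator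
    (rep.isSelfAdjoint_field (h (m j))) _ (hR (h (m j))) (Ξ j)
  have hm : Tendsto m atTop atTop := tendsto_atTop_mono hmj tendsto_id
  refine ⟨Ψ, fun j => by rw [hΨ, rep.norm_field_apply, hhnorm, hΞnorm, one_mul], fun Φ => ?_, ?_⟩
  · refine squeeze_zero_norm (fun j => ?_)
      (by simpa using (hε.const_mul ‖Φ‖).add ((hBnull Φ).comp hm))
    rw [hΨ, ← mul_one ‖rep.B _ Φ‖, ← hΞnorm j]
    exact (rep.norm_inner_field_apply_le _ _ _).trans (by gcongr; exact hmB j)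
  · refine squeeze_zero (fun j => norm_nonneg _) (fun j => ?_)
      (by simpa using hε.const_mul (4 + 2 * |lam|))
    rw [hHΨ, hΨ]
    refine (rep.norm_field_residual_le _ _ _ _ _ E₀ lam).trans ?_
    rw [hhnorm, hΞnorm, one_mul, mul_one]
    calc _ ≤ ε j + 2 * ε j + 2 * |lam| * ε j + ε j := by
          gcongr
          exacts [hΞ j, hmK j, hmB j, hmR j]
      _ = (4 + 2 * |lam|) * ε j := by ring

open ContinuousLinearMap in
/-- **main theorem, Theorem 1.1.** Let `H` be a densely defined self-adjoint
operator on `𝒳`, `B` a cyclic CAR representation of `𝒦` on `𝒳`, `K₀` a densely defined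
operator on `𝒦`, and `E₀ ∈ ℝ` such that for every `ε ∈ (0,1]` there is a unit vector
`Ξ_ε ∈ D(H)` with `‖(H − E₀)Ξ_ε‖ ≤ ε`. Assume the weak-commutator hypothesis: for every
`h ∈ D(K₀)` there is `R h : D(H) → 𝒳` with
`⟨HΦ, (B(h)+B(h)*)Ψ⟩ − ⟨(B(h)+B(h)*)Φ, HΨ⟩ = ⟨Φ, (B(K₀h)* − B(K₀h))Ψ + (R h)Ψ⟩`,
and `(R h_n)Ψ → 0` in norm along every weakly null normalized sequence `(h_n)` in `D(K₀)`.
If `λ ≠ 0` admits a singular Weyl sequence for `K₀`, then `E₀ + λ` admits a singular Weyl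
sequence for `H`: unit vectors `Ψ_j ∈ D(H)`, weakly null, with `‖HΨ_j − (E₀+λ)Ψ_j‖ → 0`. -/
theorem essential_spectrum_main {𝒦 𝒳 : Type*}
    [NormedAddCommGroup 𝒦] [InnerProductSpace ℂ 𝒦] [CompleteSpace 𝒦]
    [NormedAddCommGroup 𝒳] [InnerProductSpace ℂ 𝒳] [CompleteSpace 𝒳]
    (H : 𝒳 →ₗ.[ℂ] 𝒳) (hHdense : Dense (H.domain : Set 𝒳)) (hHsa : IsSelfAdjoint H)
    (rep : CARRep 𝒦 𝒳) (hcyc : rep.IsCyclic)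
    (K₀ : 𝒦 →ₗ.[ℂ] 𝒦) (hKdense : Dense (K₀.domain : Set 𝒦))
    (E₀ : ℝ)
    (hE₀ : ∀ ε : ℝ, 0 < ε → ε ≤ 1 → ∃ Ξ : H.domain, ‖(Ξ : 𝒳)‖ = 1 ∧
      ‖H Ξ - (E₀ : ℂ) • (Ξ : 𝒳)‖ ≤ ε)
    (R : K₀.domain → H.domain → 𝒳)
    (hR : ∀ (h : K₀.domain) (Φ Ψ : H.domain),
      (inner ℂ (H Φ) ((rep.B (h : 𝒦) + adjoint (rep.B (h : 𝒦))) (Ψ : 𝒳)) : ℂ)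
          - (inner ℂ ((rep.B (h : 𝒦) + adjoint (rep.B (h : 𝒦))) (Φ : 𝒳)) (H Ψ) : ℂ)
        = (inner ℂ (Φ : 𝒳)
            ((adjoint (rep.B (K₀ h)) - rep.B (K₀ h)) (Ψ : 𝒳) + R h Ψ) : ℂ))
    (hRnull : ∀ h : ℕ → K₀.domain, (∀ n, ‖(h n : 𝒦)‖ = 1) →
      (∀ g : 𝒦, Filter.Tendsto (fun n => (inner ℂ g ((h n : 𝒦)) : ℂ)) Filter.atTop (nhds 0)) →
      ∀ Ψ : H.domain, Filter.Tendsto (fun n => ‖R (h n) Ψ‖) Filter.atTop (nhds 0))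
    (lam : ℝ) (hlam : lam ≠ 0)
    (h : ℕ → K₀.domain) (hhnorm : ∀ n, ‖(h n : 𝒦)‖ = 1)
    (hhweak : ∀ g : 𝒦,
      Filter.Tendsto (fun n => (inner ℂ g ((h n : 𝒦)) : ℂ)) Filter.atTop (nhds 0))
    (hhweyl : Filter.Tendsto (fun n => ‖K₀ (h n) - (lam : ℂ) • ((h n : 𝒦))‖)
      Filter.atTop (nhds 0)) :
    ∃ Ψ : ℕ → H.domain, (∀ j, ‖(Ψ j : 𝒳)‖ = 1) ∧
      (∀ Φ : 𝒳, Filter.Tendsto (fun j => (inner ℂ Φ ((Ψ j : 𝒳)) : ℂ)) Filter.atTop (nhds 0)) ∧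
      Filter.Tendsto (fun j => ‖H (Ψ j) - ((E₀ + lam : ℝ) : ℂ) • ((Ψ j : 𝒳))‖)
        Filter.atTop (nhds 0) :=
  essential_spectrum_main_general H hHsa rep hcyc K₀ E₀ hE₀ R hR hRnull lam h hhnorm hhweak hhweyl
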